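/- For every integer ℓ ≥ 1 and every n ∈ ℤ, if f(ℓ, x, q^ℓ·s) ≠ 0 then f(n, x, s) − (f(2ℓ, x, s)/f(ℓ, x, q^ℓ·s))·f(n−ℓ, x, q^ℓ·s) + (−1)^ℓ · q^{ℓ(3ℓ−1)/2} · s^ℓ · (f(ℓ, x, s)/f(ℓ, x, q^ℓ·s))·f(n−2ℓ, x, q^{2ℓ}·s) = 0. -/

import Mathlib

open Finset

variable {K : Type*} [Field K]

noncomputable def qFibPos (q x t : K) : ℕ → K
  | 0 => 0
  | 1 => 1
  | n + 2 => x * qFibPos q x t (n + 1) + q ^ n * t * qFibPos q x t n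

noncomputable def qFibNeg (q x t : K) : ℕ → K
  | 0 => 0
  | 1 => q / t
  | m + 2 => (qFibNeg q x t m - x * qFibNeg q x t (m + 1)) * q ^ (m + 2) / t

/-- The Carlitz q-Fibonacci polynomial `f(n, x, t)` for `n : ℤ`, defined by `f 0 = 0`,
`f 1 = 1` and `f n = x * f (n-1) + q^(n-2) * t * f (n-2)`, solved backwards for `n < 0`. -/
noncomputable def qFib (q x t : K) : ℤ → K
  | Int.ofNat n => qFibPos q x t n
  | Int.negSucc m => qFibNeg q x t (m + 1)

/-!
Every function of `n` occurring in the identity solves the recurrence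
`D (n + 2) = x * D (n + 1) + q ^ n * s * D n`: shifting the index by `m` turns the parameter
`q ^ m * s` into `s`. Since `q ^ n * s ≠ 0`, such a solution is determined by two consecutive
values, so it suffices to check the identity at `n = 2ℓ` (trivial) and `n = 2ℓ + 1`. The latter
follows from the addition formula for `f (m + n)` at `m = ℓ`, which reduces it to a q-analogue of
Cassini's identity for `f (·, x, q ^ ℓ * s)` and `f (·, x, q ^ (ℓ + 1) * s)`.
-/

section

variable {q x t : K}

lemma qFib_natCast_add_two (n : ℕ) :
    qFib q x t ((n : ℤ) + 2) = x * qFib q x t (n + 1) + q ^ n * t * qFib q x t n :=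
  rfl

lemma qFib_zero : qFib q x t 0 = 0 := rfl

lemma qFib_one : qFib q x t 1 = 1 := rfl

lemma qFib_neg_natCast (m : ℕ) : qFib q x t (-m) = qFibNeg q x t m := by
  cases m <;> rfl

lemma qFib_add_two (hq : q ≠ 0) (ht : t ≠ 0) (n : ℤ) :
    qFib q x t (n + 2) = x * qFib q x t (n + 1) + q ^ n * t * qFib q x t n := by
  obtain ⟨n, rfl | rfl⟩ := n.eq_nat_or_neg
  · simpa only [zpow_natCast] using qFib_natCast_add_two (t := t) n
  match n with
  | 0 =>
    simpa only [Nat.cast_zero, neg_zero, zpow_zero, pow_zero] using qFib_natCast_add_two (t := t) 0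
  | 1 =>
    show 1 = x * 0 + q ^ (-1 : ℤ) * t * (q / t)
    field_simp
    ring
  | m + 2 =>
    have hqm : q ^ (m + 2) ≠ 0 := pow_ne_zero _ hq
    rw [show -((m + 2 : ℕ) : ℤ) + 2 = -m by push_cast; ring,
      show -((m + 2 : ℕ) : ℤ) + 1 = -(m + 1 : ℕ) by push_cast; ring,
      qFib_neg_natCast, qFib_neg_natCast, qFib_neg_natCast, qFibNeg, zpow_neg, zpow_natCast]
    field_simp
    ring

variable (q x t) in
def qFibSolutions : Submodule K (ℤ → K) where
  carrier := {D | ∀ n, D (n + 2) = x * D (n + 1) + q ^ n * t * D n}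
  add_mem' {D E} hD hE n := by simp only [Pi.add_apply, hD n, hE n]; ring
  zero_mem' _ := by simp
  smul_mem' c D hD n := by simp only [Pi.smul_apply, smul_eq_mul, hD n]; ring

lemma qFib_mem_qFibSolutions (hq : q ≠ 0) (ht : t ≠ 0) : qFib q x t ∈ qFibSolutions q x t :=
  qFib_add_two hq ht

namespace qFibSolutions

lemma comp_add_mem (hq : q ≠ 0) {D : ℤ → K} (hD : D ∈ qFibSolutions q x t) (m : ℤ) :
    (fun n ↦ D (m + n)) ∈ qFibSolutions q x (q ^ m * t) := by
  intro n
  simp only [← add_assoc, hD (m + n), zpow_add₀ hq]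
  ring

lemma comp_sub_mem (hq : q ≠ 0) {D : ℤ → K} {m : ℤ}
    (hD : D ∈ qFibSolutions q x (q ^ m * t)) : (fun n ↦ D (n - m)) ∈ qFibSolutions q x t := by
  intro n
  have h := hD (n - m)
  rw [show n - m + 2 = n + 2 - m by ring, show n - m + 1 = n + 1 - m by ring] at h
  dsimp only
  rw [h, ← mul_assoc, ← zpow_add₀ hq, sub_add_cancel]

lemma eq_zero (hq : q ≠ 0) (ht : t ≠ 0) {D : ℤ → K} (hD : D ∈ qFibSolutions q x t)
    {a : ℤ} (h₀ : D a = 0) (h₁ : D (a + 1) = 0) : D = 0 := by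
  have key (n : ℤ) : D n = 0 ∧ D (n + 1) = 0 := by
    induction n using Int.inductionOn' (b := a) with
    | zero => exact ⟨h₀, h₁⟩
    | succ k _ ih => exact ⟨ih.2, by rw [add_assoc, one_add_one_eq_two, hD k, ih.1, ih.2]; ring⟩
    | pred k _ ih =>
      have h := hD (k - 1)
      rw [show k - 1 + 2 = k + 1 by ring, sub_add_cancel, ih.1, ih.2] at h
      have hc : q ^ (k - 1) * t ≠ 0 := mul_ne_zero (zpow_ne_zero _ hq) ht
      refine ⟨(mul_eq_zero.mp ?_).resolve_left hc, by rw [sub_add_cancel]; exact ih.1⟩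
      linear_combination -h
  funext n
  exact (key n).1

lemma ext (hq : q ≠ 0) (ht : t ≠ 0) {D E : ℤ → K} (hD : D ∈ qFibSolutions q x t)
    (hE : E ∈ qFibSolutions q x t) {a : ℤ} (h₀ : D a = E a) (h₁ : D (a + 1) = E (a + 1)) :
    D = E :=
  sub_eq_zero.mp <| eq_zero hq ht (sub_mem hD hE) (sub_eq_zero.mpr h₀) (sub_eq_zero.mpr h₁)

end qFibSolutions

lemma qFib_add (hq : q ≠ 0) (ht : t ≠ 0) (m n : ℤ) :
    qFib q x t (m + n) = qFib q x t (m + 1) * qFib q x (q ^ m * t) n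
      + q ^ m * t * qFib q x t m * qFib q x (q ^ (m + 1) * t) (n - 1) := by
  have htm : q ^ m * t ≠ 0 := mul_ne_zero (zpow_ne_zero _ hq) ht
  have htm₁ : q ^ (m + 1) * t ≠ 0 := mul_ne_zero (zpow_ne_zero _ hq) ht
  have hshift : q ^ (m + 1) * t = q ^ (1 : ℤ) * (q ^ m * t) := by rw [zpow_add₀ hq]; ring
  have hlhs := qFibSolutions.comp_add_mem hq (qFib_mem_qFibSolutions (x := x) hq ht) m
  have hsub : (fun n ↦ qFib q x (q ^ (m + 1) * t) (n - 1)) ∈ qFibSolutions q x (q ^ m * t) :=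
    qFibSolutions.comp_sub_mem hq (hshift ▸ qFib_mem_qFibSolutions hq htm₁)
  have hrhs : (fun n ↦ qFib q x t (m + 1) * qFib q x (q ^ m * t) n
      + q ^ m * t * qFib q x t m * qFib q x (q ^ (m + 1) * t) (n - 1))
      ∈ qFibSolutions q x (q ^ m * t) :=
    add_mem (Submodule.smul_mem _ _ (qFib_mem_qFibSolutions hq htm)) (Submodule.smul_mem _ _ hsub)
  refine congrFun (qFibSolutions.ext hq htm hlhs hrhs (a := 0) ?_ ?_) n
  · show qFib q x t (m + 0) = _ * 0 + _ * (q / (q ^ (m + 1) * t))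
    rw [add_zero, zpow_add_one₀ hq]
    field_simp
    ring
  · simp [qFib_zero, qFib_one]

lemma qFib_cassini (q x u : K) (n : ℕ) :
    qFib q x (q * u) (n + 1 : ℕ) * qFib q x u (n + 1 : ℕ)
      - qFib q x (q * u) n * qFib q x u (n + 2 : ℕ)
    = (-1) ^ n * q ^ (n * (n + 1) / 2) * u ^ n := by
  induction n with
  | zero => simp [qFib_zero, qFib_one]
  | succ n ih =>
    have hu := qFib_natCast_add_two (q := q) (x := x) (t := u) (n + 1)
    have hqu := qFib_natCast_add_two (q := q) (x := x) (t := q * u) n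
    have hexp : (n + 1) * (n + 1 + 1) / 2 = n * (n + 1) / 2 + (n + 1) := by
      rw [show (n + 1) * (n + 1 + 1) = n * (n + 1) + 2 * (n + 1) by ring,
        Nat.add_mul_div_left _ _ two_pos]
    rw [hexp, pow_add]
    push_cast at hu hqu ih ⊢
    simp only [add_assoc, Int.reduceAdd] at hu ⊢
    linear_combination qFib q x u (n + 2) * hqu - qFib q x (q * u) (n + 1) * hu
      - q ^ (n + 1) * u * ih

lemma qFib_three_term_two_mul_add_one (hq : q ≠ 0) (ht : t ≠ 0) {ℓ : ℕ} (hℓ : 1 ≤ ℓ) :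
    qFib q x t (2 * ℓ + 1) * qFib q x (q ^ ℓ * t) ℓ
      - qFib q x t (2 * ℓ) * qFib q x (q ^ ℓ * t) (ℓ + 1)
      + (-1) ^ ℓ * q ^ (ℓ * (3 * ℓ - 1) / 2) * t ^ ℓ * qFib q x t ℓ = 0 := by
  obtain ⟨k, rfl⟩ : ∃ k, ℓ = k + 1 := ⟨ℓ - 1, by omega⟩
  have hexp : (k + 1) * (3 * (k + 1) - 1) / 2 = k * (k + 1) / 2 + (k + 1) * (k + 1) := by
    rw [show (k + 1) * (3 * (k + 1) - 1) = k * (k + 1) + 2 * ((k + 1) * (k + 1)) by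
      rw [show 3 * (k + 1) - 1 = 3 * k + 2 by omega]; ring, Nat.add_mul_div_left _ _ two_pos]
  set u := q ^ (k + 1) * t with hu
  have hnext : q ^ ((k + 1 : ℕ) + 1 : ℤ) * t = q * u := by
    rw [zpow_add_one₀ hq, zpow_natCast]; ring
  have hsign : (-1) ^ (k + 1) * q ^ ((k + 1) * (3 * (k + 1) - 1) / 2) * t ^ (k + 1)
      = -(u * ((-1) ^ k * q ^ (k * (k + 1) / 2) * u ^ k)) := by
    rw [hexp, hu]; ring
  have hsum := qFib_add (x := x) hq ht (k + 1 : ℕ) (k + 1 : ℕ)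
  have hsum₁ := qFib_add (x := x) hq ht (k + 1 : ℕ) ((k + 1 : ℕ) + 1)
  have hcas := qFib_cassini q x u k
  rw [zpow_natCast, hnext, ← two_mul, show ((k + 1 : ℕ) : ℤ) - 1 = k by push_cast; ring]
    at hsum
  rw [zpow_natCast, hnext, ← add_assoc, ← two_mul, add_sub_cancel_right] at hsum₁
  rw [show ((k + 2 : ℕ) : ℤ) = (k + 1 : ℕ) + 1 by push_cast; ring] at hcas
  rw [hsign]
  linear_combination qFib q x u (k + 1 : ℕ) * hsum₁ - qFib q x u ((k + 1 : ℕ) + 1) * hsum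
    + u * qFib q x t (k + 1 : ℕ) * hcas

lemma qFib_sub_natCast_mem_qFibSolutions (hq : q ≠ 0) (ht : t ≠ 0) (m : ℕ) :
    (fun n ↦ qFib q x (q ^ m * t) (n - m)) ∈ qFibSolutions q x t :=
  qFibSolutions.comp_sub_mem hq <| by
    rw [zpow_natCast]; exact qFib_mem_qFibSolutions hq (mul_ne_zero (pow_ne_zero _ hq) ht)

lemma qFib_three_term (hq : q ≠ 0) (ht : t ≠ 0) {ℓ : ℕ} (hℓ : 1 ≤ ℓ) (n : ℤ) :
    qFib q x (q ^ ℓ * t) ℓ * qFib q x t n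
      - qFib q x t (2 * ℓ : ℕ) * qFib q x (q ^ ℓ * t) (n - ℓ)
      + (-1) ^ ℓ * q ^ (ℓ * (3 * ℓ - 1) / 2) * t ^ ℓ * qFib q x t ℓ
        * qFib q x (q ^ (2 * ℓ) * t) (n - 2 * ℓ) = 0 := by
  set σ := (-1) ^ ℓ * q ^ (ℓ * (3 * ℓ - 1) / 2) * t ^ ℓ * qFib q x t ℓ
  have hmem : (fun n ↦ qFib q x (q ^ ℓ * t) ℓ * qFib q x t n
      - qFib q x t (2 * ℓ : ℕ) * qFib q x (q ^ ℓ * t) (n - ℓ)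
      + σ * qFib q x (q ^ (2 * ℓ) * t) (n - 2 * ℓ)) ∈ qFibSolutions q x t := by
    refine add_mem (sub_mem (Submodule.smul_mem _ _ (qFib_mem_qFibSolutions hq ht))
      (Submodule.smul_mem _ _ (qFib_sub_natCast_mem_qFibSolutions hq ht ℓ)))
      (Submodule.smul_mem _ _ ?_)
    simpa using qFib_sub_natCast_mem_qFibSolutions (x := x) hq ht (2 * ℓ)
  have hzero := qFibSolutions.eq_zero hq ht hmem (a := 2 * ℓ) ?_ ?_
  · exact congrFun hzero n
  · show _ * _ - _ * qFib q x (q ^ ℓ * t) (2 * ℓ - ℓ)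
      + σ * qFib q x (q ^ (2 * ℓ) * t) (2 * ℓ - 2 * ℓ) = 0
    rw [sub_self, qFib_zero, show (2 * ℓ - ℓ : ℤ) = ℓ by ring]
    push_cast
    ring
  · show _ * _ - _ * qFib q x (q ^ ℓ * t) (2 * ℓ + 1 - ℓ)
      + σ * qFib q x (q ^ (2 * ℓ) * t) (2 * ℓ + 1 - 2 * ℓ) = 0
    rw [add_sub_cancel_left, show (2 * ℓ + 1 - ℓ : ℤ) = ℓ + 1 by ring, qFib_one]
    push_cast
    linear_combination qFib_three_term_two_mul_add_one (x := x) hq ht hℓ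

end

theorem qFib_recurrence_ell_one (q x s : K) (hq : q ≠ 0) (hs : s ≠ 0)
    (ℓ : ℕ) (hℓ : 1 ≤ ℓ) (n : ℤ)
    (hf : qFib q x (q ^ ℓ * s) (ℓ : ℤ) ≠ 0) :
    qFib q x s n
      - (qFib q x s ((2 * ℓ : ℕ)) / qFib q x (q ^ ℓ * s) (ℓ : ℤ)) *
          qFib q x (q ^ ℓ * s) (n - ℓ)
      + (-1 : K) ^ ℓ * q ^ (ℓ * (3 * ℓ - 1) / 2) * s ^ ℓ *
          (qFib q x s (ℓ : ℤ) / qFib q x (q ^ ℓ * s) (ℓ : ℤ)) *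
          qFib q x (q ^ (2 * ℓ) * s) (n - 2 * ℓ) = 0 := by
  rw [← zero_div (qFib q x (q ^ ℓ * s) ℓ), ← qFib_three_term (x := x) hq hs hℓ n]
  field_simp
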